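/- arXiv:2107.03827 — 2 statements merged into one kernel-verified Lean document; each statement's English description precedes it below -/
import Mathlib

section
/- Let G be a finite simple graph with maximum degree Δ(G) ≥ 2 such that G has no spanning even subgraph without isolated vertices. Then every proper edge-coloring of G uses strictly more than δ(G) colors, where δ(G) is the minimum degree of G. -/
open SimpleGraph

/-- `c` is a proper edge-coloring of `G`: distinct edges sharing a vertex
receive distinct colors. -/
def IsProperEdgeColoring {V : Type*} (G : SimpleGraph V) (c : Sym2 V → ℕ) : Prop :=
  ∀ e₁ ∈ G.edgeSet, ∀ e₂ ∈ G.edgeSet, e₁ ≠ e₂ → (∃ v, v ∈ e₁ ∧ v ∈ e₂) → c e₁ ≠ c e₂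

/-- The palette of a vertex `v`: the set of colors of edges incident with `v`. -/
def palette {V : Type*} (G : SimpleGraph V) (c : Sym2 V → ℕ) (v : V) : Set ℕ :=
  c '' (G.incidenceSet v)

/-- The number of distinct palettes occurring among the vertices. -/
noncomputable def numPalettes {V : Type*} (G : SimpleGraph V) (c : Sym2 V → ℕ) : ℕ :=
  (Set.range (palette G c)).ncard

/-- The palette index of `G`: the minimum number of distinct palettes over all
proper edge-colorings of `G`. -/
noncomputable def paletteIndex {V : Type*} (G : SimpleGraph V) : ℕ :=
  sInf { n | ∃ c, IsProperEdgeColoring G c ∧ numPalettes G c = n }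

/-- `G` has a spanning even subgraph without isolated vertices. -/
def ExistsSpanningEvenNoIsolated {V : Type*} (G : SimpleGraph V) : Prop :=
  ∃ K : SimpleGraph V, K ≤ G ∧ (∀ v, Even (K.neighborSet v).ncard) ∧
    (∀ v, 1 ≤ (K.neighborSet v).ncard)

/-!
If at most `δ(G)` colors are used, then every vertex, having at least `δ(G)` differently colored
incident edges, sees every color. Since `Δ(G) ≥ 2` there are two distinct colors `a` and `b`, and
the edges colored `a` or `b` then form a spanning `2`-regular subgraph, which is even and has no
isolated vertices.
-/

section

variable {V : Type*} {G : SimpleGraph V} {c : Sym2 V → ℕ}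

theorem exists_adj_of_mem_palette {a : ℕ} {v : V} (h : a ∈ palette G c v) :
    ∃ x, G.Adj v x ∧ c s(v, x) = a := by
  obtain ⟨e, ⟨he, hv⟩, rfl⟩ := h
  obtain ⟨x, rfl⟩ := Sym2.mem_iff_exists.mp hv
  exact ⟨x, he, rfl⟩

def twoColorSubgraph (G : SimpleGraph V) (c : Sym2 V → ℕ) (a b : ℕ) : SimpleGraph V :=
  fromEdgeSet (G.edgeSet ∩ c ⁻¹' {a, b})

theorem twoColorSubgraph_le (a b : ℕ) : twoColorSubgraph G c a b ≤ G :=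
  fun _ _ h => h.1.1

namespace IsProperEdgeColoring

theorem injOn_incidenceSet (hc : IsProperEdgeColoring G c) (v : V) :
    Set.InjOn c (G.incidenceSet v) := fun e₁ he₁ e₂ he₂ h =>
  by_contra fun hne => hc e₁ he₁.1 e₂ he₂.1 hne ⟨v, he₁.2, he₂.2⟩ h

theorem eq_of_color_eq (hc : IsProperEdgeColoring G c) {v x y : V} (hx : G.Adj v x)
    (hy : G.Adj v y) (h : c s(v, x) = c s(v, y)) : x = y :=
  Sym2.congr_right.mp
    (hc.injOn_incidenceSet v ⟨hx, Sym2.mem_mk_left _ _⟩ ⟨hy, Sym2.mem_mk_left _ _⟩ h)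

theorem neighborSet_twoColorSubgraph (hc : IsProperEdgeColoring G c) {v x y : V}
    (hx : G.Adj v x) (hy : G.Adj v y) :
    (twoColorSubgraph G c (c s(v, x)) (c s(v, y))).neighborSet v = {x, y} := by
  ext z
  simp only [twoColorSubgraph, mem_neighborSet, fromEdgeSet_adj, Set.mem_inter_iff,
    mem_edgeSet, Set.mem_preimage, Set.mem_insert_iff, Set.mem_singleton_iff]
  constructor
  · rintro ⟨⟨hz, hzx | hzy⟩, -⟩
    · exact .inl (hc.eq_of_color_eq hz hx hzx)
    · exact .inr (hc.eq_of_color_eq hz hy hzy)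
  · rintro (rfl | rfl)
    · exact ⟨⟨hx, .inl rfl⟩, hx.ne⟩
    · exact ⟨⟨hy, .inr rfl⟩, hy.ne⟩

theorem existsSpanningEvenNoIsolated_of_mem_palette (hc : IsProperEdgeColoring G c)
    {a b : ℕ} (hab : a ≠ b) (h : ∀ v, a ∈ palette G c v ∧ b ∈ palette G c v) :
    ExistsSpanningEvenNoIsolated G := by
  have hdeg : ∀ v, ((twoColorSubgraph G c a b).neighborSet v).ncard = 2 := by
    intro v
    obtain ⟨x, hx, rfl⟩ := exists_adj_of_mem_palette (h v).1
    obtain ⟨y, hy, rfl⟩ := exists_adj_of_mem_palette (h v).2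
    rw [hc.neighborSet_twoColorSubgraph hx hy, Set.ncard_pair fun hxy => hab (by rw [hxy])]
  exact ⟨_, twoColorSubgraph_le a b, fun v => hdeg v ▸ even_two,
    fun v => (hdeg v).symm ▸ one_le_two⟩

variable [Fintype V] [DecidableRel G.Adj]

theorem ncard_palette (hc : IsProperEdgeColoring G c) (v : V) :
    (palette G c v).ncard = G.degree v := by
  classical
  rw [palette, (hc.injOn_incidenceSet v).ncard_image, Set.ncard_eq_toFinset_card',
    Set.toFinset_card, card_incidenceSet_eq_degree]

theorem degree_le_ncard_image (hc : IsProperEdgeColoring G c) (v : V) :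
    G.degree v ≤ (c '' G.edgeSet).ncard :=
  hc.ncard_palette v ▸ Set.ncard_le_ncard (Set.image_mono (G.incidenceSet_subset v))

theorem palette_eq_of_ncard_image_le (hc : IsProperEdgeColoring G c) {v : V}
    (h : (c '' G.edgeSet).ncard ≤ G.degree v) : palette G c v = c '' G.edgeSet :=
  Set.eq_of_subset_of_ncard_le (Set.image_mono (G.incidenceSet_subset v))
    (hc.ncard_palette v ▸ h)

end IsProperEdgeColoring

end

theorem num_colors_gt_min_degree {V : Type*} [Fintype V] (G : SimpleGraph V)
    [DecidableRel G.Adj] (hdelta : 2 ≤ G.maxDegree)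
    (hno : ¬ ExistsSpanningEvenNoIsolated G)
    (c : Sym2 V → ℕ) (hc : IsProperEdgeColoring G c) :
    G.minDegree < (c '' G.edgeSet).ncard := by
  by_contra! hle
  have hfull (v : V) : palette G c v = c '' G.edgeSet :=
    hc.palette_eq_of_ncard_image_le (hle.trans (G.minDegree_le_degree v))
  obtain ⟨w, hw⟩ : ∃ w, 2 ≤ G.degree w := by
    by_contra! h
    exact (G.maxDegree_le_of_forall_degree_le 1 fun v => Nat.le_of_lt_succ (h v)).not_gt hdelta
  obtain ⟨a, b, ha, hb, hab⟩ :=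
    (Set.one_lt_ncard_iff (Set.toFinite _)).mp (hw.trans (hc.degree_le_ncard_image w))
  exact hno (hc.existsSpanningEvenNoIsolated_of_mem_palette hab
    fun v => ⟨hfull v ▸ ha, hfull v ▸ hb⟩)
end

section
/- Let G be a connected finite simple cubic (3-regular) graph. Then G is not 3-edge-colorable and G has a perfect matching if and only if the palette index of G equals 3, i.e., š(G) = 3. -/
open SimpleGraph

/-! A perfect matching `M` of a cubic graph leaves a disjoint union of cycles, whose edges can be
colored greedily with `0, 1, 2`; coloring `M` with `3` gives every vertex one of the three palettes
`{0, 1, 2, 3} \ {m}`, `m < 3`. Conversely, a coloring with at most two palettes `A`, `B` can be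
relabelled by a map that sends both `A` and `B` bijectively onto `{0, 1, 2}`, which makes `G`
3-edge-colorable, and a 3-edge-coloring has a single palette. Finally, any three 3-sets of colors
admit a set `S` of colors meeting each of them exactly once, and for a coloring with three palettes
the edges with colors in `S` form a perfect matching. -/

namespace SimpleGraph

theorem ncard_neighborSet_eq_degree {V : Type*} (G : SimpleGraph V) (v : V)
    [Fintype (G.neighborSet v)] : (G.neighborSet v).ncard = G.degree v := by
  rw [Set.ncard_eq_toFinset_card', Set.toFinset_card, card_neighborSet_eq_degree]

theorem ncard_incidenceSet {V : Type*} (G : SimpleGraph V) (v : V) :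
    (G.incidenceSet v).ncard = (G.neighborSet v).ncard := by
  classical
  rw [← Nat.card_coe_set_eq, ← Nat.card_coe_set_eq,
    Nat.card_congr (G.incidenceSetEquivNeighborSet v)]

theorem colorable_succ_of_forall_ncard_neighborSet_le {W : Type*} [Finite W]
    {H : SimpleGraph W} {d : ℕ} (h : ∀ v, (H.neighborSet v).ncard ≤ d) :
    H.Colorable (d + 1) := by
  classical
  have := Fintype.ofFinite W
  suffices ∀ s : Finset W, ∃ f : W → Fin (d + 1), ∀ u ∈ s, ∀ v ∈ s, H.Adj u v → f u ≠ f v by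
    obtain ⟨f, hf⟩ := this Finset.univ
    exact ⟨Coloring.mk f fun huv => hf _ (Finset.mem_univ _) _ (Finset.mem_univ _) huv⟩
  intro s
  induction s using Finset.induction_on with
  | empty => exact ⟨fun _ => 0, by simp⟩
  | insert a s ha ih =>
    obtain ⟨f, hf⟩ := ih
    have hfree : (f '' H.neighborSet a).ncard < (Set.univ : Set (Fin (d + 1))).ncard := by
      rw [Set.ncard_univ, Nat.card_fin]
      exact Nat.lt_succ_of_le ((Set.ncard_image_le (Set.toFinite _)).trans (h a))
    obtain ⟨k, -, hk⟩ := Set.exists_mem_notMem_of_ncard_lt_ncard hfree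
    refine ⟨Function.update f a k, ?_⟩
    simp only [Finset.mem_insert]
    rintro u (rfl | hu) v (rfl | hv) huv
    · exact absurd huv H.irrefl
    · rw [Function.update_self, Function.update_of_ne (by rintro rfl; exact ha hv)]
      exact fun hkv => hk ⟨v, huv, hkv.symm⟩
    · rw [Function.update_self, Function.update_of_ne (by rintro rfl; exact ha hu)]
      exact fun hku => hk ⟨u, huv.symm, hku⟩
    · rw [Function.update_of_ne (by rintro rfl; exact ha hu),
        Function.update_of_ne (by rintro rfl; exact ha hv)]
      exact hf u hu v hv huv

theorem ncard_neighborSet_lineGraph_le {V : Type*} [Finite V] {F : SimpleGraph V} {d : ℕ}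
    (h : ∀ v, (F.incidenceSet v).ncard ≤ d + 1) (e : F.edgeSet) :
    (F.lineGraph.neighborSet e).ncard ≤ 2 * d := by
  obtain ⟨e, he⟩ := e
  induction e using Sym2.ind with
  | h x y =>
    have hsub : Subtype.val '' F.lineGraph.neighborSet ⟨s(x, y), he⟩ ⊆
        (F.incidenceSet x \ {s(x, y)}) ∪ (F.incidenceSet y \ {s(x, y)}) := by
      rintro _ ⟨⟨e', he'⟩, hadj, rfl⟩
      obtain ⟨hne, w, hw, hw'⟩ := lineGraph_adj_iff_exists.1 hadj
      have hne : e' ≠ s(x, y) := fun h => hne (Subtype.ext h.symm)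
      rcases Sym2.mem_iff.1 hw with rfl | rfl
      · exact Or.inl ⟨⟨he', hw'⟩, hne⟩
      · exact Or.inr ⟨⟨he', hw'⟩, hne⟩
    have hx := Set.ncard_sdiff_singleton_of_mem
      (show s(x, y) ∈ F.incidenceSet x from ⟨he, Sym2.mem_mk_left x y⟩)
    have hy := Set.ncard_sdiff_singleton_of_mem
      (show s(x, y) ∈ F.incidenceSet y from ⟨he, Sym2.mem_mk_right x y⟩)
    rw [← Set.ncard_image_of_injective _ Subtype.val_injective]
    calc _ ≤ _ := Set.ncard_le_ncard hsub
      _ ≤ _ := Set.ncard_union_le _ _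
      _ ≤ 2 * d := by have := h x; have := h y; omega

end SimpleGraph

namespace Set

variable {α : Type*}

theorem exists_subset_pair_of_ncard_le_two {s : Set α} {p : α → Prop} (hs : s.ncard ≤ 2)
    (hfin : s.Finite) (hp : ∀ a ∈ s, p a) (hex : ∃ a, p a) :
    ∃ a b, p a ∧ p b ∧ s ⊆ {a, b} := by
  obtain ⟨a, ha⟩ := hex
  interval_cases h : s.ncard
  · exact ⟨a, a, ha, ha, by simp [(ncard_eq_zero hfin).1 h]⟩
  · obtain ⟨x, rfl⟩ := ncard_eq_one.1 h
    exact ⟨x, x, hp x rfl, hp x rfl, by simp⟩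
  · obtain ⟨x, y, -, rfl⟩ := ncard_eq_two.1 h
    exact ⟨x, y, hp x (.inl rfl), hp y (.inr rfl), subset_rfl⟩

theorem Finite.exists_bijOn_bijOn {β : Type*} [Nonempty β] {A B : Set α} {T : Set β}
    (hA : A.Finite) (hAT : A.encard = T.encard) (hBT : B.encard = T.encard) :
    ∃ f : α → β, BijOn f A T ∧ BijOn f B T := by
  classical
  have hB : B.Finite := encard_ne_top_iff.1 (hBT.trans hAT.symm ▸ hA.encard_lt_top.ne)
  obtain ⟨g, hg⟩ := hA.exists_bijOn_of_encard_eq hAT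
  have hcard : (B \ A).encard = (g '' (A \ B)).encard := by
    rw [(hg.injOn.mono sdiff_subset).encard_image,
      ← encard_eq_encard_iff_encard_sdiff_eq_encard_sdiff (hA.subset inter_subset_right), hAT, hBT]
  obtain ⟨h, hh⟩ := hB.sdiff.exists_bijOn_of_encard_eq hcard
  set f := (B \ A).piecewise h g
  have hgA : EqOn f g A := fun x hx => piecewise_eq_of_notMem _ _ _ fun hx' => hx'.2 hx
  refine ⟨f, hg.congr hgA.symm, ?_⟩
  have hT : g '' (B ∩ A) ∪ g '' (A \ B) = T := by
    rw [← hg.image_eq, ← image_union, inter_comm, inter_union_sdiff]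
  rw [← inter_union_sdiff B A, ← hT]
  have h₁ : BijOn f (B ∩ A) (g '' (B ∩ A)) :=
    (hg.injOn.mono inter_subset_right).bijOn_image.congr (hgA.symm.mono inter_subset_right)
  have h₂ : BijOn f (B \ A) (g '' (A \ B)) := hh.congr (piecewise_eqOn _ _ _).symm
  refine h₁.union h₂ ((injOn_union disjoint_sdiff_inter.symm).2 ⟨h₁.injOn, h₂.injOn, ?_⟩)
  rintro x ⟨hxB, hxA⟩ y hy hxy
  obtain ⟨z, ⟨hzA, hzB⟩, hz⟩ := h₂.mapsTo hy
  rw [← hxy, hgA hxA] at hz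
  exact hzB (hg.injOn hzA hxA hz ▸ hxB)

theorem ncard_eq_venn {A : Set α} (B C : Set α) (hA : A.Finite) :
    A.ncard = (A \ (B ∪ C)).ncard + ((A ∩ B) \ C).ncard + ((A ∩ C) \ B).ncard +
      (A ∩ B ∩ C).ncard := by
  rw [← ncard_inter_add_ncard_sdiff_eq_ncard A B hA,
    ← ncard_inter_add_ncard_sdiff_eq_ncard (A ∩ B) C (hA.subset inter_subset_left),
    ← ncard_inter_add_ncard_sdiff_eq_ncard (A \ B) C (hA.subset sdiff_subset),
    sdiff_sdiff, sdiff_inter_right_comm]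
  omega

theorem exists_ncard_inter_eq_one {P₁ P₂ P₃ : Set α} (h₁ : P₁.ncard = 3) (h₂ : P₂.ncard = 3)
    (h₃ : P₃.ncard = 3) :
    ∃ S : Set α, (P₁ ∩ S).ncard = 1 ∧ (P₂ ∩ S).ncard = 1 ∧ (P₃ ∩ S).ncard = 1 := by
  have e₁ := ncard_eq_venn P₂ P₃ (finite_of_ncard_ne_zero (h₁ ▸ three_ne_zero))
  have e₂ := ncard_eq_venn P₁ P₃ (finite_of_ncard_ne_zero (h₂ ▸ three_ne_zero))
  have e₃ := ncard_eq_venn P₁ P₂ (finite_of_ncard_ne_zero (h₃ ▸ three_ne_zero))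
  rw [inter_comm P₂ P₁] at e₂
  rw [inter_comm P₃ P₁, inter_comm P₃ P₂, inter_right_comm P₁ P₃ P₂] at e₃
  have key : 0 < (P₁ ∩ P₂ ∩ P₃).ncard ∨
      (0 < (P₁ \ (P₂ ∪ P₃)).ncard ∧ 0 < (P₂ \ (P₁ ∪ P₃)).ncard ∧
        0 < (P₃ \ (P₁ ∪ P₂)).ncard) ∨
      (0 < ((P₁ ∩ P₂) \ P₃).ncard ∧ 0 < (P₃ \ (P₁ ∪ P₂)).ncard) ∨
      (0 < ((P₁ ∩ P₃) \ P₂).ncard ∧ 0 < (P₂ \ (P₁ ∪ P₃)).ncard) ∨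
      (0 < ((P₂ ∩ P₃) \ P₁).ncard ∧ 0 < (P₁ \ (P₂ ∪ P₃)).ncard) := by
    omega
  have hne (s : Set α) (hs : 0 < s.ncard) : s.Nonempty := nonempty_of_ncard_ne_zero hs.ne'
  clear e₁ e₂ e₃ h₁ h₂ h₃
  rcases key with h | ⟨hx, hy, hz⟩ | ⟨hx, hy⟩ | ⟨hx, hy⟩ | ⟨hx, hy⟩
  · obtain ⟨x, hx⟩ := hne _ h
    exact ⟨{x}, by simp_all⟩
  · obtain ⟨x, hx⟩ := hne _ hx
    obtain ⟨y, hy⟩ := hne _ hy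
    obtain ⟨z, hz⟩ := hne _ hz
    exact ⟨{x, y, z}, by simp_all [inter_insert_of_mem, inter_insert_of_notMem]⟩
  all_goals
    obtain ⟨x, hx⟩ := hne _ hx
    obtain ⟨y, hy⟩ := hne _ hy
    exact ⟨{x, y}, by simp_all [inter_insert_of_mem, inter_insert_of_notMem]⟩

end Set

def EdgeColorable {V : Type*} (G : SimpleGraph V) (k : ℕ) : Prop :=
  ∃ c, IsProperEdgeColoring G c ∧ ∀ e ∈ G.edgeSet, c e < k

section Palette

variable {V : Type*} {G : SimpleGraph V} {c : Sym2 V → ℕ}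

theorem mem_palette_of_mem_edgeSet {v : V} {e : Sym2 V} (he : e ∈ G.edgeSet) (hv : v ∈ e) :
    c e ∈ palette G c v :=
  Set.mem_image_of_mem c ⟨he, hv⟩

theorem IsProperEdgeColoring.injOn_incidenceSet_s12 (hc : IsProperEdgeColoring G c) (v : V) :
    Set.InjOn c (G.incidenceSet v) := fun e₁ h₁ e₂ h₂ he =>
  not_not.1 fun hne => hc e₁ h₁.1 e₂ h₂.1 hne ⟨v, h₁.2, h₂.2⟩ he

theorem IsProperEdgeColoring.ncard_palette_s12 (hc : IsProperEdgeColoring G c) (v : V)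
    [Fintype (G.neighborSet v)] : (palette G c v).ncard = G.degree v := by
  rw [palette, (hc.injOn_incidenceSet_s12 v).ncard_image, G.ncard_incidenceSet,
    G.ncard_neighborSet_eq_degree]

theorem IsProperEdgeColoring.comp (hc : IsProperEdgeColoring G c) {f : ℕ → ℕ}
    (hf : ∀ v, Set.InjOn f (palette G c v)) : IsProperEdgeColoring G (f ∘ c) := by
  rintro e₁ h₁ e₂ h₂ hne ⟨v, hv₁, hv₂⟩ heq
  exact hc e₁ h₁ e₂ h₂ hne ⟨v, hv₁, hv₂⟩
    (hf v (mem_palette_of_mem_edgeSet h₁ hv₁) (mem_palette_of_mem_edgeSet h₂ hv₂) heq)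

theorem edgeColorable_of_forall_palette_mem_pair (hc : IsProperEdgeColoring G c) {k : ℕ}
    {A B : Set ℕ} (hA : A.Finite) (hB : B.Finite) (hAk : A.ncard = k) (hBk : B.ncard = k)
    (hpal : ∀ v, palette G c v ∈ ({A, B} : Set (Set ℕ))) : EdgeColorable G k := by
  have hencard {P : Set ℕ} (hP : P.Finite) (hPk : P.ncard = k) : P.encard = (Set.Iio k).encard := by
    rw [← hP.cast_ncard_eq, ← (Set.finite_Iio k).cast_ncard_eq, hPk, Set.ncard_Iio_nat]
  obtain ⟨f, hfA, hfB⟩ := hA.exists_bijOn_bijOn (hencard hA hAk) (hencard hB hBk)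
  have hf : ∀ v, Set.BijOn f (palette G c v) (Set.Iio k) := fun v => by
    rcases hpal v with h | h <;> rw [h] <;> assumption
  refine ⟨f ∘ c, hc.comp fun v => (hf v).injOn, fun e he => ?_⟩
  induction e using Sym2.ind with
  | h x y => exact (hf x).mapsTo (mem_palette_of_mem_edgeSet he (Sym2.mem_mk_left x y))

theorem numPalettes_le_of_forall_palette (k : ℕ)
    (h : ∀ v, k ∈ palette G c v ∧ palette G c v ⊆ Set.Iic k ∧ (palette G c v).ncard = k) :
    numPalettes G c ≤ k := by
  have hrange : Set.range (palette G c) ⊆ (fun m => Set.Iic k \ {m}) '' Set.Iio k := by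
    rintro _ ⟨v, rfl⟩
    obtain ⟨hk, hsub, hcard⟩ := h v
    have hlt : (palette G c v).ncard < (Set.Iic k).ncard := by simp [hcard]
    obtain ⟨m, hm, hmv⟩ :=
      Set.exists_mem_notMem_of_ncard_lt_ncard hlt ((Set.finite_Iic k).subset hsub)
    have hmk : m < k := lt_of_le_of_ne hm (by rintro rfl; exact hmv hk)
    refine ⟨m, hmk, (Set.eq_of_subset_of_ncard_le ?_ ?_).symm⟩
    · exact fun x hx => ⟨hsub hx, by rintro rfl; exact hmv hx⟩
    · rw [Set.ncard_sdiff_singleton_of_mem hm, hcard]; simp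
  calc numPalettes G c ≤ ((fun m => Set.Iic k \ {m}) '' Set.Iio k).ncard :=
        Set.ncard_le_ncard hrange
    _ ≤ (Set.Iio k).ncard := Set.ncard_image_le (Set.finite_Iio k)
    _ = k := Set.ncard_Iio_nat k

theorem paletteIndex_le (hc : IsProperEdgeColoring G c) : paletteIndex G ≤ numPalettes G c :=
  Nat.sInf_le ⟨c, hc, rfl⟩

theorem exists_numPalettes_eq_paletteIndex [Countable V] (G : SimpleGraph V) :
    ∃ c, IsProperEdgeColoring G c ∧ numPalettes G c = paletteIndex G := by
  obtain ⟨ι, hι⟩ := Countable.exists_injective_nat (Sym2 V)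
  exact Nat.sInf_mem (s := {n | ∃ c, IsProperEdgeColoring G c ∧ numPalettes G c = n})
    ⟨_, ι, fun e₁ _ e₂ _ hne _ h => hne (hι h), rfl⟩

theorem exists_isPerfectMatching_of_ncard_palette_inter_eq_one (hc : IsProperEdgeColoring G c)
    {S : Set ℕ} (hS : ∀ v, (palette G c v ∩ S).ncard = 1) :
    ∃ M : G.Subgraph, M.IsPerfectMatching := by
  refine ⟨(⊤ : G.Subgraph).deleteEdges {e | c e ∉ S}, Subgraph.isPerfectMatching_iff.2 fun v => ?_⟩
  simp only [Subgraph.deleteEdges_adj, Subgraph.top_adj, Set.mem_ofPred_eq, not_not]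
  have hcard : (G.incidenceSet v ∩ c ⁻¹' S).ncard = 1 := by
    rw [← (hc.injOn_incidenceSet_s12 v).mono Set.inter_subset_left |>.ncard_image,
      Set.image_inter_preimage, ← palette, hS]
  obtain ⟨e, he⟩ := Set.ncard_eq_one.1 hcard
  obtain ⟨⟨heG, hve⟩, heS⟩ := he.symm ▸ Set.mem_singleton e
  obtain ⟨w, rfl⟩ := Sym2.mem_iff_exists.1 hve
  refine ⟨w, ⟨heG, heS⟩, fun u hu => ?_⟩
  have : s(v, u) ∈ G.incidenceSet v ∩ c ⁻¹' S := ⟨⟨hu.1, Sym2.mem_mk_left v u⟩, hu.2⟩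
  rw [he, Set.mem_singleton_iff] at this
  exact Sym2.congr_right.1 this

variable [Fintype V] [DecidableRel G.Adj] {k : ℕ}

theorem palette_eq_Iio (hreg : G.IsRegularOfDegree k) (hc : IsProperEdgeColoring G c)
    (hlt : ∀ e ∈ G.edgeSet, c e < k) (v : V) : palette G c v = Set.Iio k :=
  Set.eq_of_subset_of_ncard_le (by rintro _ ⟨e, he, rfl⟩; exact hlt e he.1)
    (by rw [hc.ncard_palette_s12, hreg v, Set.ncard_Iio_nat]) (Set.finite_Iio k)

theorem numPalettes_le_one (hreg : G.IsRegularOfDegree k) (hc : IsProperEdgeColoring G c)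
    (hlt : ∀ e ∈ G.edgeSet, c e < k) : numPalettes G c ≤ 1 :=
  (Set.ncard_le_ncard (Set.range_subset_iff.2 (palette_eq_Iio hreg hc hlt))).trans
    (Set.ncard_singleton _).le

end Palette

open Classical in
noncomputable def extendColoring {V : Type*} {F : SimpleGraph V} {k : ℕ}
    (col : F.lineGraph.Coloring (Fin k)) (e : Sym2 V) : ℕ :=
  if h : e ∈ F.edgeSet then col ⟨e, h⟩ else k

section Matching

variable {V : Type*} {G : SimpleGraph V} {M : G.Subgraph} {k : ℕ}

theorem extendColoring_le {F : SimpleGraph V} (col : F.lineGraph.Coloring (Fin k)) (e : Sym2 V) :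
    extendColoring col e ≤ k := by
  unfold extendColoring
  split_ifs
  exacts [(col _).isLt.le, le_rfl]

theorem exists_adj_of_notMem_edgeSet_sdiff {e : Sym2 V} (he : e ∈ G.edgeSet)
    (hF : e ∉ (G \ M.spanningCoe).edgeSet) {v : V} (hv : v ∈ e) :
    ∃ w, M.Adj v w ∧ e = s(v, w) := by
  obtain ⟨w, rfl⟩ := Sym2.mem_iff_exists.1 hv
  exact ⟨w, not_not.1 fun hM => hF ⟨he, hM⟩, rfl⟩

theorem isProperEdgeColoring_extendColoring (hM : M.IsMatching)
    (col : (G \ M.spanningCoe).lineGraph.Coloring (Fin k)) :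
    IsProperEdgeColoring G (extendColoring col) := by
  rintro e₁ h₁ e₂ h₂ hne ⟨v, hv₁, hv₂⟩
  unfold extendColoring
  split_ifs with hF₁ hF₂ hF₂
  · have hadj : (G \ M.spanningCoe).lineGraph.Adj ⟨e₁, hF₁⟩ ⟨e₂, hF₂⟩ :=
      lineGraph_adj_iff_exists.2 ⟨fun h => hne (congrArg Subtype.val h), v, hv₁, hv₂⟩
    exact fun h => col.valid hadj (Fin.ext h)
  · exact (col _).isLt.ne
  · exact (col _).isLt.ne'
  · obtain ⟨w₁, hw₁, rfl⟩ := exists_adj_of_notMem_edgeSet_sdiff h₁ hF₁ hv₁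
    obtain ⟨w₂, hw₂, rfl⟩ := exists_adj_of_notMem_edgeSet_sdiff h₂ hF₂ hv₂
    exact absurd (by rw [hM.eq_of_adj_left hw₁ hw₂]) hne

theorem mem_palette_extendColoring (hM : M.IsPerfectMatching)
    (col : (G \ M.spanningCoe).lineGraph.Coloring (Fin k)) (v : V) :
    k ∈ palette G (extendColoring col) v := by
  obtain ⟨w, hw, -⟩ := Subgraph.isPerfectMatching_iff.1 hM v
  refine ⟨s(v, w), ⟨M.adj_sub hw, Sym2.mem_mk_left v w⟩, ?_⟩
  unfold extendColoring
  exact dif_neg fun h => h.2 hw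

theorem ncard_neighborSet_sdiff_spanningCoe [Fintype V] [DecidableRel G.Adj]
    (hreg : G.IsRegularOfDegree (k + 1)) (hM : M.IsPerfectMatching) (v : V) :
    ((G \ M.spanningCoe).neighborSet v).ncard = k := by
  obtain ⟨w, hw, hunique⟩ := Subgraph.isPerfectMatching_iff.1 hM v
  have : (G \ M.spanningCoe).neighborSet v = G.neighborSet v \ {w} := by
    ext u
    simp only [mem_neighborSet, sdiff_adj, Subgraph.spanningCoe_adj, Set.mem_sdiff,
      Set.mem_singleton_iff]
    exact and_congr_right fun _ => ⟨fun h hu => h (hu ▸ hw), fun h hu => h (hunique u hu)⟩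
  rw [this, Set.ncard_sdiff_singleton_of_mem (show w ∈ G.neighborSet v from M.adj_sub hw),
    ncard_neighborSet_eq_degree, hreg v, Nat.add_sub_cancel]

end Matching

section Cubic

variable {V : Type*} [Fintype V] {G : SimpleGraph V} [DecidableRel G.Adj] {c : Sym2 V → ℕ}

theorem three_le_numPalettes (hreg : G.IsRegularOfDegree 3) (hc : IsProperEdgeColoring G c)
    (hcol : ¬ EdgeColorable G 3) : 3 ≤ numPalettes G c := by
  by_contra! h
  obtain ⟨A, B, ⟨hA, hA3⟩, ⟨hB, hB3⟩, hsub⟩ :=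
    Set.exists_subset_pair_of_ncard_le_two (p := fun P : Set ℕ => P.Finite ∧ P.ncard = 3)
      (Nat.le_of_lt_succ h) (Set.finite_range _)
      (by rintro _ ⟨v, rfl⟩; exact ⟨(Set.toFinite _).image c, hc.ncard_palette_s12 v ▸ hreg v⟩)
      ⟨Set.Iio 3, Set.finite_Iio 3, Set.ncard_Iio_nat 3⟩
  exact hcol (edgeColorable_of_forall_palette_mem_pair hc hA hB hA3 hB3 fun v => hsub ⟨v, rfl⟩)

theorem exists_numPalettes_le_three (hreg : G.IsRegularOfDegree 3) {M : G.Subgraph}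
    (hM : M.IsPerfectMatching) : ∃ c, IsProperEdgeColoring G c ∧ numPalettes G c ≤ 3 := by
  obtain ⟨col⟩ : (G \ M.spanningCoe).lineGraph.Colorable (2 + 1) :=
    colorable_succ_of_forall_ncard_neighborSet_le <| ncard_neighborSet_lineGraph_le fun v => by
      rw [ncard_incidenceSet, ncard_neighborSet_sdiff_spanningCoe hreg hM]
  have hc := isProperEdgeColoring_extendColoring hM.1 col
  refine ⟨_, hc, numPalettes_le_of_forall_palette 3 fun v =>
    ⟨mem_palette_extendColoring hM col v, ?_, hc.ncard_palette_s12 v ▸ hreg v⟩⟩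
  rintro _ ⟨e, -, rfl⟩
  exact extendColoring_le col e

theorem exists_isPerfectMatching_of_numPalettes_eq_three (hreg : G.IsRegularOfDegree 3)
    (hc : IsProperEdgeColoring G c) (h : numPalettes G c = 3) :
    ∃ M : G.Subgraph, M.IsPerfectMatching := by
  obtain ⟨P₁, P₂, P₃, -, -, -, hP⟩ := Set.ncard_eq_three.1 h
  have hcard : ∀ P ∈ Set.range (palette G c), P.ncard = 3 := by
    rintro _ ⟨v, rfl⟩
    exact hc.ncard_palette_s12 v ▸ hreg v
  rw [hP] at hcard
  obtain ⟨S, hS⟩ := Set.exists_ncard_inter_eq_one (hcard P₁ (by simp)) (hcard P₂ (by simp))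
    (hcard P₃ (by simp))
  refine exists_isPerfectMatching_of_ncard_palette_inter_eq_one hc (S := S) fun v => ?_
  obtain h | h | h : palette G c v ∈ ({P₁, P₂, P₃} : Set (Set ℕ)) := hP ▸ ⟨v, rfl⟩
  all_goals rw [h]; simp [hS]

end Cubic

theorem cubic_palette_three_iff_general {V : Type*} [Fintype V]
    (G : SimpleGraph V) [DecidableRel G.Adj]
    (hreg : G.IsRegularOfDegree 3) :
    ((¬ ∃ c, IsProperEdgeColoring G c ∧ ∀ e ∈ G.edgeSet, c e < 3) ∧
      (∃ M : G.Subgraph, M.IsPerfectMatching)) ↔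
      paletteIndex G = 3 := by
  constructor
  · rintro ⟨hcol, M, hM⟩
    obtain ⟨c, hc, hc3⟩ := exists_numPalettes_le_three hreg hM
    obtain ⟨c₀, hc₀, hc₀min⟩ := exists_numPalettes_eq_paletteIndex G
    exact le_antisymm ((paletteIndex_le hc).trans hc3)
      (hc₀min ▸ three_le_numPalettes hreg hc₀ hcol)
  · intro h
    obtain ⟨c, hc, hc3⟩ := exists_numPalettes_eq_paletteIndex G
    refine ⟨fun ⟨c', hc', hlt⟩ => ?_,
      exists_isPerfectMatching_of_numPalettes_eq_three hreg hc (hc3.trans h)⟩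
    have := (paletteIndex_le hc').trans (numPalettes_le_one hreg hc' hlt)
    omega

theorem cubic_palette_three_iff {V : Type*} [Fintype V]
    (G : SimpleGraph V) [DecidableRel G.Adj]
    (hconn : G.Connected) (hreg : G.IsRegularOfDegree 3) :
    ((¬ ∃ c, IsProperEdgeColoring G c ∧ ∀ e ∈ G.edgeSet, c e < 3) ∧
      (∃ M : G.Subgraph, M.IsPerfectMatching)) ↔
      paletteIndex G = 3 :=
  cubic_palette_three_iff_general G hreg
end
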